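/- Let X ∈ ℝ^{N×p}, Y ∈ ℝ^N, and M ∈ ℝ^{N×p} with Xᵀ M = Mᵀ M and Mᵀ M invertible and Xᵀ X − Mᵀ M invertible. If (β̂, K̂) satisfies the normal equations Xᵀ X β̂ + Xᵀ(X − M) K̂ = Xᵀ Y and Xᵀ(X − M) β̂ + Xᵀ(X − M) K̂ = (X − M)ᵀ Y, then β̂ = (Mᵀ M)⁻¹ Mᵀ Y and K̂ = (Xᵀ X − Mᵀ M)⁻¹ Xᵀ (Y − X β̂). -/

import Mathlib

/-!
Since `Xᵀ M = Mᵀ M`, both left-hand coefficient matrices `Xᵀ (X - M)` equal `Xᵀ X - Mᵀ M`.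
Subtracting the second normal equation from the first eliminates `K̂` and leaves
`Mᵀ M β̂ = Mᵀ Y`; the first equation then reads `(Xᵀ X - Mᵀ M) K̂ = Xᵀ (Y - X β̂)`.
-/

open Matrix

namespace Matrix

variable {m n R : Type*} [Fintype m] [CommRing R]

theorem eq_nonsing_inv_mulVec_of_mulVec_eq [Fintype n] [DecidableEq n] {A : Matrix n n R}
    (hA : IsUnit A) {x b : n → R} (h : A *ᵥ x = b) : x = A⁻¹ *ᵥ b := by
  rw [← h, mulVec_mulVec, nonsing_inv_mul _ ((isUnit_iff_isUnit_det A).mp hA), one_mulVec]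

section NormalEquations

variable {X M : Matrix m n R} {Y : m → R} {β K : n → R}

theorem transpose_mul_sub_eq_of_transpose_mul_eq (hXM : Xᵀ * M = Mᵀ * M) :
    Xᵀ * (X - M) = Xᵀ * X - Mᵀ * M := by
  rw [Matrix.mul_sub, hXM]

variable [Fintype n]

theorem gram_mulVec_eq_of_normal_equations (hXM : Xᵀ * M = Mᵀ * M)
    (heq1 : (Xᵀ * X) *ᵥ β + (Xᵀ * (X - M)) *ᵥ K = Xᵀ *ᵥ Y)
    (heq2 : (Xᵀ * (X - M)) *ᵥ β + (Xᵀ * (X - M)) *ᵥ K = (X - M)ᵀ *ᵥ Y) :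
    (Mᵀ * M) *ᵥ β = Mᵀ *ᵥ Y := by
  simpa only [add_sub_add_right_eq_sub, transpose_mul_sub_eq_of_transpose_mul_eq hXM,
    transpose_sub, sub_mulVec, sub_sub_cancel] using congrArg₂ (· - ·) heq1 heq2

theorem residual_mulVec_eq_of_normal_equation (hXM : Xᵀ * M = Mᵀ * M)
    (heq1 : (Xᵀ * X) *ᵥ β + (Xᵀ * (X - M)) *ᵥ K = Xᵀ *ᵥ Y) :
    (Xᵀ * X - Mᵀ * M) *ᵥ K = Xᵀ *ᵥ (Y - X *ᵥ β) := by
  rw [transpose_mul_sub_eq_of_transpose_mul_eq hXM] at heq1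
  rw [mulVec_sub, mulVec_mulVec, ← heq1, add_sub_cancel_left]

end NormalEquations

end Matrix

/-- Closed-form solution of the normal equations of empirical
Generative Invariance. -/
theorem closed_form_estimators (N p : ℕ)
    (X M : Matrix (Fin N) (Fin p) ℝ) (Y : Fin N → ℝ)
    (hXM : Xᵀ * M = Mᵀ * M)
    (hMM : IsUnit (Mᵀ * M))
    (hXXMM : IsUnit (Xᵀ * X - Mᵀ * M))
    (β K : Fin p → ℝ)
    (heq1 : (Xᵀ * X) *ᵥ β + (Xᵀ * (X - M)) *ᵥ K = Xᵀ *ᵥ Y)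
    (heq2 : (Xᵀ * (X - M)) *ᵥ β + (Xᵀ * (X - M)) *ᵥ K = (X - M)ᵀ *ᵥ Y) :
    β = (Mᵀ * M)⁻¹ *ᵥ (Mᵀ *ᵥ Y) ∧
    K = (Xᵀ * X - Mᵀ * M)⁻¹ *ᵥ (Xᵀ *ᵥ (Y - X *ᵥ β)) :=
  ⟨eq_nonsing_inv_mulVec_of_mulVec_eq hMM (gram_mulVec_eq_of_normal_equations hXM heq1 heq2),
    eq_nonsing_inv_mulVec_of_mulVec_eq hXXMM (residual_mulVec_eq_of_normal_equation hXM heq1)⟩
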